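/- Every tournament with 5 vertices is isomorphic to exactly one of the following twelve tournaments: 5̲, 3̲(1̲, 1̲, C3), 3̲(C3, 1̲, 1̲), 3̲(1̲, C3, 1̲), 2̲(1̲, C4), 2̲(C4, 1̲), C3(1̲, 2̲, 2̲), C3(1̲, 1̲, C3), C3(1̲, 1̲, 3̲), U5, V5, and W5, where C4 denotes the tournament C3(1̲, 1̲, 2̲) on 4 vertices. In particular, up to isomorphism, the indecomposable tournaments with 5 vertices are exactly U5, V5 and W5. -/
import Mathlib


/-- A tournament on a vertex type `V`: an irreflexive relation such that for all distinct
vertices exactly one of `arc x y`, `arc y x` holds. -/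
structure Tournament (V : Type) where
  arc : V → V → Prop
  irrefl : ∀ x, ¬ arc x x
  total : ∀ x y, x ≠ y → (arc x y ↔ ¬ arc y x)

namespace Tournament

variable {V : Type}

/-- The arc set `A(T)` of a tournament, as a set of ordered pairs. -/
def arcSet (T : Tournament V) : Set (V × V) := {p | T.arc p.1 p.2}

/-- `M` is a module of `T`. -/
def IsModule (T : Tournament V) (M : Set V) : Prop :=
  ∀ x ∈ M, ∀ y ∈ M, ∀ v ∉ M, (T.arc v x ↔ T.arc v y)

/-- The trivial modules: `∅`, singletons, and the whole vertex set. -/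
def IsTrivialModule (_ : Tournament V) (M : Set V) : Prop :=
  M = ∅ ∨ (∃ x, M = {x}) ∨ M = Set.univ

/-- `M` is a nontrivial module of `T`. -/
def IsNontrivialModule (T : Tournament V) (M : Set V) : Prop :=
  T.IsModule M ∧ ¬ T.IsTrivialModule M

/-- `T` is indecomposable if all its modules are trivial. -/
def Indecomposable (T : Tournament V) : Prop :=
  ∀ M : Set V, T.IsModule M → T.IsTrivialModule M

/-- `T` is decomposable if it is not indecomposable. -/
def Decomposable (T : Tournament V) : Prop := ¬ T.Indecomposable

/-- `M` is a co-module of `T`: `M` or its complement is a nontrivial module of `T`. -/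
def IsComodule (T : Tournament V) (M : Set V) : Prop :=
  T.IsNontrivialModule M ∨ T.IsNontrivialModule Mᶜ

/-- A co-modular decomposition of `T`: a set of pairwise disjoint co-modules of `T`. -/
def IsComodularDecomposition (T : Tournament V) (D : Set (Set V)) : Prop :=
  (∀ M ∈ D, T.IsComodule M) ∧ D.Pairwise Disjoint

/-- A minimal co-module: a co-module containing no other co-module. -/
def IsMinimalComodule (T : Tournament V) (M : Set V) : Prop :=
  T.IsComodule M ∧ ∀ N : Set V, T.IsComodule N → N ⊆ M → N = M

/-- A minimal nontrivial module: a nontrivial module containing no other nontrivial module. -/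
def IsMinimalNontrivialModule (T : Tournament V) (M : Set V) : Prop :=
  T.IsNontrivialModule M ∧ ∀ N : Set V, T.IsNontrivialModule N → N ⊆ M → N = M

/-- The co-modular index `Δ(T)`: the maximum cardinality of a co-modular decomposition. -/
noncomputable def Delta [Fintype V] (T : Tournament V) : ℕ :=
  sSup {n | ∃ D : Set (Set V), T.IsComodularDecomposition D ∧ D.ncard = n}

/-- The dual tournament `T*`. -/
def dual (T : Tournament V) : Tournament V where
  arc x y := T.arc y x
  irrefl := T.irrefl
  total x y h := T.total y x (Ne.symm h)

/-- The subtournament `T[X]` induced by `X ⊆ V(T)`. -/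
def restrict (T : Tournament V) (X : Set V) : Tournament X where
  arc x y := T.arc x.1 y.1
  irrefl x := T.irrefl x.1
  total x y h := T.total x.1 y.1 (fun he => h (Subtype.ext he))

/-- Isomorphism of tournaments. -/
def Iso {V W : Type} (T : Tournament V) (S : Tournament W) : Prop :=
  ∃ e : V ≃ W, ∀ x y, T.arc x y ↔ S.arc (e x) (e y)

/-- `T.Iso X` or `T.Iso X.dual`. -/
def IsoOrDual {V γ : Type} (T : Tournament V) (X : Tournament γ) : Prop :=
  T.Iso X ∨ T.Iso X.dual

/-- `Inv(T, B)`: the tournament obtained from `T` by reversing all arcs in `B ⊆ A(T)`. -/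
def inv (T : Tournament V) (B : Set (V × V)) (hB : B ⊆ T.arcSet) : Tournament V where
  arc x y := (T.arc x y ∧ (x, y) ∉ B) ∨ (y, x) ∈ B
  irrefl x h := by
    rcases h with ⟨h1, _⟩ | h2
    · exact T.irrefl x h1
    · exact T.irrefl x (hB h2)
  total x y hxy := by
    have hx := T.total x y hxy
    constructor
    · rintro (⟨h1, hnB⟩ | hB1)
      · rintro (⟨h2, _⟩ | hB2)
        · exact (hx.mp h1) h2
        · exact hnB hB2
      · rintro (⟨h2, hnB⟩ | hB2)
        · exact hnB hB1
        · exact (hx.mp (hB hB2)) (hB hB1)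
    · intro h
      have hA : ¬(T.arc y x ∧ (y, x) ∉ B) := fun hc => h (Or.inl hc)
      have hB2 : (x, y) ∉ B := fun hc => h (Or.inr hc)
      by_cases h1 : T.arc x y
      · exact Or.inl ⟨h1, hB2⟩
      · have h2 : T.arc y x := by
          by_contra h3
          exact h1 (hx.mpr h3)
        have h4 : (y, x) ∈ B := by
          by_contra h5
          exact hA ⟨h2, h5⟩
        exact Or.inr h4

/-- The decomposability index `δ(T)`: the least number of arcs whose reversal makes `T`
indecomposable. -/
noncomputable def delta [Fintype V] (T : Tournament V) : ℕ :=
  sInf {n | ∃ (B : Set (V × V)) (hB : B ⊆ T.arcSet),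
    B.ncard = n ∧ (T.inv B hB).Indecomposable}

end Tournament

/-- The transitive tournament `n̲` on `{0, …, n-1}`. -/
def transTournament (n : ℕ) : Tournament (Fin n) where
  arc i j := i.val < j.val
  irrefl i := by omega
  total i j h := by
    have : i.val ≠ j.val := fun he => h (Fin.ext he)
    omega

/-- The 3-cycle `C3`. -/
def C3 : Tournament (Fin 3) where
  arc i j := j.val = (i.val + 1) % 3
  irrefl i := by have := i.isLt; omega
  total i j h := by
    have hi := i.isLt
    have hj := j.isLt
    have : i.val ≠ j.val := fun he => h (Fin.ext he)
    omega

/-- The indecomposable tournament `U5` on 5 vertices. -/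
def U5 : Tournament (Fin 5) where
  arc i j := (i, j) ∈
    ([(0,1),(0,2),(1,2),(3,0),(1,3),(2,3),(4,0),(4,1),(2,4),(3,4)] : List (Fin 5 × Fin 5))
  irrefl := by decide
  total := by decide

/-- The indecomposable tournament `V5` on 5 vertices (obtained from `U5` by reversing `(3,4)`). -/
def V5 : Tournament (Fin 5) where
  arc i j := (i, j) ∈
    ([(0,1),(0,2),(1,2),(3,0),(1,3),(2,3),(4,0),(4,1),(2,4),(4,3)] : List (Fin 5 × Fin 5))
  irrefl := by decide
  total := by decide

/-- The indecomposable tournament `W5` on 5 vertices. -/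
def W5 : Tournament (Fin 5) where
  arc i j := (i, j) ∈
    ([(0,1),(0,2),(0,3),(1,2),(1,3),(2,3),(4,0),(4,2),(1,4),(3,4)] : List (Fin 5 × Fin 5))
  irrefl := by decide
  total := by decide

/-- The lexicographic sum `2̲(A, B)`: all arcs from `A` to `B`. -/
def sum2 {α β : Type} (A : Tournament α) (B : Tournament β) : Tournament (α ⊕ β) where
  arc x y :=
    match x, y with
    | .inl a, .inl a' => A.arc a a'
    | .inl _, .inr _ => True
    | .inr _, .inl _ => False
    | .inr b, .inr b' => B.arc b b'
  irrefl x := by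
    cases x with
    | inl a => exact A.irrefl a
    | inr b => exact B.irrefl b
  total x y hxy := by
    cases x with
    | inl a =>
      cases y with
      | inl a' => exact A.total a a' (fun h => hxy (congrArg Sum.inl h))
      | inr b' => simp
    | inr b =>
      cases y with
      | inl a' => simp
      | inr b' => exact B.total b b' (fun h => hxy (congrArg Sum.inr h))

/-- The lexicographic sum `C3(A, B, C)`. -/
def sumC3 {α β γ : Type} (A : Tournament α) (B : Tournament β) (C : Tournament γ) :
    Tournament (α ⊕ β ⊕ γ) where
  arc x y :=
    match x, y with
    | .inl a, .inl a' => A.arc a a'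
    | .inl _, .inr (.inl _) => True
    | .inl _, .inr (.inr _) => False
    | .inr (.inl _), .inl _ => False
    | .inr (.inl b), .inr (.inl b') => B.arc b b'
    | .inr (.inl _), .inr (.inr _) => True
    | .inr (.inr _), .inl _ => True
    | .inr (.inr _), .inr (.inl _) => False
    | .inr (.inr c), .inr (.inr c') => C.arc c c'
  irrefl x := by
    rcases x with a | b | c
    · exact A.irrefl a
    · exact B.irrefl b
    · exact C.irrefl c
  total x y hxy := by
    rcases x with a | b | c <;> rcases y with a' | b' | c'
    · exact A.total a a' (fun h => hxy (by rw [h]))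
    · simp
    · simp
    · simp
    · exact B.total b b' (fun h => hxy (by rw [h]))
    · simp
    · simp
    · simp
    · exact C.total c c' (fun h => hxy (by rw [h]))

/-- The lexicographic sum of the tournaments `F i` over the tournament `S`. -/
def lexSum {ι : Type} {f : ι → Type} (S : Tournament ι) (F : ∀ i, Tournament (f i)) :
    Tournament (Σ i, f i) where
  arc := Sigma.Lex S.arc (fun i => (F i).arc)
  irrefl x h := by
    cases h with
    | left a b h => exact S.irrefl _ h
    | right a b h => exact (F _).irrefl _ h
  total := by
    rintro ⟨i, a⟩ ⟨j, b⟩ hne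
    by_cases hij : i = j
    · subst hij
      have hab : a ≠ b := fun h => hne (by rw [h])
      constructor
      · intro h h'
        cases h with
        | left a b h => exact S.irrefl i h
        | right a b h =>
          cases h' with
          | left a b h' => exact S.irrefl i h'
          | right a b h' => exact (((F i).total _ _ hab).mp h) h'
      · intro h
        apply Sigma.Lex.right
        refine ((F i).total a b hab).mpr ?_
        intro h'
        exact h (Sigma.Lex.right _ _ h')
    · constructor
      · intro h h'
        have h1 : S.arc i j := by
          cases h with
          | left a b h => exact h
          | right a b h => exact absurd rfl hij
        have h2 : S.arc j i := by
          cases h' with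
          | left a b h' => exact h'
          | right a b h' => exact absurd rfl hij
        exact ((S.total i j hij).mp h1) h2
      · intro h
        apply Sigma.Lex.left
        refine (S.total i j hij).mpr ?_
        intro h'
        exact h (Sigma.Lex.left _ _ h')

/-- The tournament `1̲`. -/
abbrev oneT : Tournament (Fin 1) := transTournament 1

/-- The tournament `2̲`. -/
abbrev twoT : Tournament (Fin 2) := transTournament 2

/-- `2̲(1̲, X)`. -/
def w2 {β : Type} (X : Tournament β) : Tournament (Fin 1 ⊕ β) := sum2 oneT X

/-- `3̲(1̲, X, 1̲)`. -/
def w3 {β : Type} (X : Tournament β) : Tournament (Fin 1 ⊕ β ⊕ Fin 1) :=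
  sum2 oneT (sum2 X oneT)

/-- `C3(1̲, 1̲, X)`. -/
def wC3 {β : Type} (X : Tournament β) : Tournament (Fin 1 ⊕ Fin 1 ⊕ β) := sumC3 oneT oneT X

/-- The lexicographic product `S.2̲`. -/
def prodTwo {k : ℕ} (S : Tournament (Fin k)) : Tournament (Σ _ : Fin k, Fin 2) :=
  lexSum S (fun _ => twoT)

/-- A tournament on `Fin m`, packaged with its number of vertices. -/
abbrev PTour : Type := Σ m : ℕ, Tournament (Fin m)

def pOne : PTour := ⟨1, transTournament 1⟩
def pTwo : PTour := ⟨2, transTournament 2⟩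
def pC3 : PTour := ⟨3, C3⟩

/-- Each summand `F i` is isomorphic to the prescribed tournament `(Q i).2`. -/
def FibersIso {k : ℕ} {f : Fin k → Type} (F : ∀ i, Tournament (f i)) (Q : Fin k → PTour) :
    Prop :=
  ∀ i, (F i).Iso (Q i).2

/-- `δ(n)`: the maximum of `δ(T)` over the tournaments with `n` vertices. -/
noncomputable def deltaMax (n : ℕ) : ℕ := sSup {m | ∃ T : Tournament (Fin n), T.delta = m}

/-- `Δ(n)`: the maximum of `Δ(T)` over the tournaments with `n` vertices. -/
noncomputable def DeltaMax (n : ℕ) : ℕ := sSup {m | ∃ T : Tournament (Fin n), T.Delta = m}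


/-- `C4 = C3(1̲, 1̲, 2̲)`, the 4-vertex tournament used in the list of 5-vertex tournaments. -/
def C4 : Tournament (Fin 1 ⊕ Fin 1 ⊕ Fin 2) := sumC3 oneT oneT twoT

/-- The twelve 5-vertex tournaments: `5̲`, `3̲(1̲,1̲,C3)`, `3̲(C3,1̲,1̲)`, `3̲(1̲,C3,1̲)`,
`2̲(1̲,C4)`, `2̲(C4,1̲)`, `C3(1̲,2̲,2̲)`, `C3(1̲,1̲,C3)`, `C3(1̲,1̲,3̲)`, `U5`, `V5`, `W5`. -/
def fiveList : Fin 12 → (γ : Type) × Tournament γ :=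
  ![⟨_, transTournament 5⟩,
    ⟨_, sum2 oneT (sum2 oneT C3)⟩,
    ⟨_, sum2 C3 (sum2 oneT oneT)⟩,
    ⟨_, sum2 oneT (sum2 C3 oneT)⟩,
    ⟨_, sum2 oneT C4⟩,
    ⟨_, sum2 C4 oneT⟩,
    ⟨_, sumC3 oneT twoT twoT⟩,
    ⟨_, sumC3 oneT oneT C3⟩,
    ⟨_, sumC3 oneT oneT (transTournament 3)⟩,
    ⟨_, U5⟩,
    ⟨_, V5⟩,
    ⟨_, W5⟩]

namespace Stmt19
open Tournament

lemma iso_refl {V : Type} (T : Tournament V) : T.Iso T := ⟨Equiv.refl V, fun _ _ => Iff.rfl⟩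

lemma iso_symm {V W : Type} {T : Tournament V} {S : Tournament W} (h : T.Iso S) : S.Iso T := by
  obtain ⟨e, he⟩ := h
  refine ⟨e.symm, fun x y => ?_⟩
  rw [he (e.symm x) (e.symm y), e.apply_symm_apply, e.apply_symm_apply]

lemma iso_trans {V W X : Type} {T : Tournament V} {S : Tournament W} {R : Tournament X}
    (h1 : T.Iso S) (h2 : S.Iso R) : T.Iso R := by
  obtain ⟨e, he⟩ := h1; obtain ⟨f, hf⟩ := h2
  exact ⟨e.trans f, fun x y => (he x y).trans (hf (e x) (e y))⟩

lemma indec_of_iso {V W : Type} {T : Tournament V} {S : Tournament W}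
    (h : T.Iso S) (hT : T.Indecomposable) : S.Indecomposable := by
  obtain ⟨e, he⟩ := h
  intro M hM
  have hmod : T.IsModule (e ⁻¹' M) := by
    intro x hx y hy v hv
    rw [he v x, he v y]
    exact hM _ hx _ hy _ hv
  have hMeq : M = e.symm ⁻¹' (e ⁻¹' M) := by
    ext z; simp
  rcases hT _ hmod with h0 | ⟨x, hx⟩ | hu
  · left; rw [hMeq, h0]; simp
  · right; left; exact ⟨e x, by rw [hMeq, hx]; ext z; simp [Equiv.symm_apply_eq]⟩
  · right; right; rw [hMeq, hu]; simp

lemma indec_iff_of_iso {V W : Type} {T : Tournament V} {S : Tournament W}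
    (h : T.Iso S) : T.Indecomposable ↔ S.Indecomposable :=
  ⟨indec_of_iso h, indec_of_iso (iso_symm h)⟩

/-- standard codes -/
def stdCode : Fin 12 → ℕ :=
  ![549790, 4727710, 550810, 615070, 2711710, 583570, 1631110, 5810050, 1632130, 3727750,
    11592070, 5776270]

def stdArc (i : Fin 12) (x y : Fin 5) : Bool := (stdCode i).testBit (5 * x.val + y.val)

lemma stdArc_ok : ∀ i : Fin 12, (∀ x, stdArc i x x = false) ∧
    (∀ x y : Fin 5, x ≠ y → stdArc i x y = !stdArc i y x) := by decide

def stdT (i : Fin 12) : Tournament (Fin 5) where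
  arc x y := stdArc i x y = true
  irrefl x := by simp [(stdArc_ok i).1 x]
  total x y h := by
    show stdArc i x y = true ↔ ¬ stdArc i y x = true
    rw [(stdArc_ok i).2 x y h]
    cases stdArc i y x <;> simp

def arcB (u : Fin 5 → Fin 5 → Bool) (i j : Fin 5) : Bool :=
  if i.val < j.val then u i j else if j.val < i.val then !(u j i) else false

def fromUpper (u : Fin 5 → Fin 5 → Bool) : Tournament (Fin 5) where
  arc i j := arcB u i j = true
  irrefl i := by simp [arcB]
  total i j h := by
    have hne : i.val ≠ j.val := fun he => h (Fin.ext he)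
    rcases Nat.lt_or_ge i.val j.val with hl | hg
    · have : ¬ j.val < i.val := by omega
      simp only [arcB, if_pos hl, if_neg (by omega : ¬ j.val < i.val), if_pos hl]
      cases u i j <;> simp
    · have hl' : j.val < i.val := by omega
      simp only [arcB, if_neg (by omega : ¬ i.val < j.val), if_pos hl']
      cases u j i <;> simp

def decIdx (w : ℕ) : Fin 12 := ⟨w % 12, Nat.mod_lt _ (by norm_num)⟩
def decPerm (w : ℕ) (k : Fin 5) : Fin 5 := ⟨w / 12 / 5 ^ k.val % 5, Nat.mod_lt _ (by norm_num)⟩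

lemma arcB_flip (u : Fin 5 → Fin 5 → Bool) (x y : Fin 5) (h : x ≠ y) :
    arcB u x y = !arcB u y x := by
  have hne : x.val ≠ y.val := fun he => h (Fin.ext he)
  rcases Nat.lt_or_ge x.val y.val with hl | hg
  · simp only [arcB, if_pos hl, if_neg (by omega : ¬ y.val < x.val), Bool.not_not]
  · have hl' : y.val < x.val := by omega
    simp only [arcB, if_neg (by omega : ¬ x.val < y.val), if_pos hl']

lemma arcB_diag (u : Fin 5 → Fin 5 → Bool) (x : Fin 5) : arcB u x x = false := by
  simp [arcB]

def verify (u : Fin 5 → Fin 5 → Bool) (w : ℕ) : Bool :=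
  (List.finRange 5).all fun x => (List.finRange 5).all fun y =>
    !(decide (x.val < y.val)) ||
      ((!(decPerm w x == decPerm w y)) &&
        (arcB u x y == stdArc (decIdx w) (decPerm w x) (decPerm w y)))

lemma verify_sound (u : Fin 5 → Fin 5 → Bool) (w : ℕ) (h : verify u w = true) :
    (fromUpper u).Iso (stdT (decIdx w)) := by
  have h' : ∀ x y : Fin 5, x.val < y.val →
      decPerm w x ≠ decPerm w y ∧
      arcB u x y = stdArc (decIdx w) (decPerm w x) (decPerm w y) := by
    intro x y hxy
    simp only [verify, List.all_eq_true, Bool.or_eq_true, Bool.and_eq_true, Bool.not_eq_true',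
      decide_eq_false_iff_not, Bool.not_eq_false', beq_iff_eq, bne_iff_ne, ne_eq,
      Bool.not_eq_true, beq_eq_false_iff_ne] at h
    have := h x (List.mem_finRange x) y (List.mem_finRange y)
    rcases this with h1 | h2
    · exact absurd hxy h1
    · exact h2
  have harc : ∀ x y : Fin 5, arcB u x y = stdArc (decIdx w) (decPerm w x) (decPerm w y) := by
    intro x y
    rcases lt_trichotomy x.val y.val with hl | he | hg
    · exact (h' x y hl).2
    · have : x = y := Fin.ext he
      subst this
      rw [arcB_diag]
      have h0 := (stdArc_ok (decIdx w)).1 (decPerm w x)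
      exact h0.symm
    · have hne : x ≠ y := fun hc => by subst hc; omega
      have hne2 : decPerm w x ≠ decPerm w y := fun hc => (h' y x hg).1 hc.symm
      rw [arcB_flip u x y hne, (h' y x hg).2,
        (stdArc_ok (decIdx w)).2 _ _ hne2.symm, Bool.not_not]
  have hinj : Function.Injective (decPerm w) := by
    intro x y hxy
    by_contra hne
    have hne' : x.val ≠ y.val := fun he => hne (Fin.ext he)
    rcases Nat.lt_or_ge x.val y.val with hl | hg
    · exact (h' x y hl).1 hxy
    · exact (h' y x (by omega)).1 hxy.symm
  have hbij : Function.Bijective (decPerm w) := Finite.injective_iff_bijective.mp hinj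
  refine ⟨Equiv.ofBijective _ hbij, fun x y => ?_⟩
  show arcB u x y = true ↔ stdArc (decIdx w) (decPerm w x) (decPerm w y) = true
  rw [harc x y]

def upperOf (b0 b1 b2 b3 b4 b5 b6 b7 b8 b9 : Bool) (i j : Fin 5) : Bool :=
  match i.val, j.val with
  | 0,1 => b0 | 0,2 => b1 | 0,3 => b2 | 0,4 => b3
  | 1,2 => b4 | 1,3 => b5 | 1,4 => b6
  | 2,3 => b7 | 2,4 => b8
  | 3,4 => b9
  | _,_ => false

def wit (b0 b1 b2 b3 b4 b5 b6 b7 b8 b9 : Bool) : ℕ :=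
  (cond b9 (cond b8 (cond b7 (cond b6 (cond b5 (cond b4 (cond b3 (cond b2 (cond b1 (cond b0 35160 35112) (cond b0 35162 34824)) (cond b1 (cond b0 31037 35115) (cond b0 35165 33336))) (cond b2 (cond b1 (cond b0 7040 14428) (cond b0 25859 34825)) (cond b1 (cond b0 35166 35116) (cond b0 35168 25848)))) (cond b3 (cond b2 (cond b1 (cond b0 34920 34922) (cond b0 34632 34584)) (cond b1 (cond b0 30797 34925) (cond b0 34635 33096))) (cond b2 (cond b1 (cond b0 6800 25619) (cond b0 13708 34585)) (cond b1 (cond b0 34926 34928) (cond b0 34636 25608))))) (cond b4 (cond b3 (cond b2 (cond b1 (cond b0 35163 30989) (cond b0 34829 30701)) (cond b1 (cond b0 31709 31661) (cond b0 33341 33338))) (cond b2 (cond b1 (cond b0 7039 26050) (cond b0 25330 21347)) (cond b1 (cond b0 29170 16307) (cond b0 16787 25850)))) (cond b3 (cond b2 (cond b1 (cond b0 33480 35117) (cond b0 33192 33195)) (cond b1 (cond b0 33482 33485) (cond b0 31704 31656))) (cond b2 (cond b1 (cond b0 5360 33486) (cond b0 12268 33196)) (cond b1 (cond b0 24179 33488)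 (cond b0 31705 24168)))))) (cond b5 (cond b4 (cond b3 (cond b2 (cond b1 (cond b0 14524 6992) (cond b0 25763 6704)) (cond b1 (cond b0 25858 6991) (cond b0 33342 5216))) (cond b2 (cond b1 (cond b0 7038 6990) (cond b0 5842 34835)) (cond b1 (cond b0 35169 16786) (cond b0 25854 5213)))) (cond b3 (cond b2 (cond b1 (cond b0 34921 26051) (cond b0 34633 13660)) (cond b1 (cond b0 21491 25234) (cond b0 33100 12172))) (cond b2 (cond b1 (cond b0 34931 5794) (cond b0 16780 16732)) (cond b1 (cond b0 8914 34927) (cond b0 25612 25611))))) (cond b4 (cond b3 (cond b2 (cond b1 (cond b0 35164 35118) (cond b0 34832 34830)) (cond b1 (cond b0 16403 29122) (cond b0 33344 24275))) (cond b2 (cond b1 (cond b0 16738 26049) (cond b0 34831 8866)) (cond b1 (cond b0 16782 16734) (cond b0 25856 25853)))) (cond b3 (cond b2 (cond b1 (cond b0 26040 35120) (cond b0 25752 34588)) (cond b1 (cond b0 26042 16739) (cond b0 24264 24265))) (cond b2 (cond b1 (cond b0 5357 26046) (cond b0 25755 25756)) (cond b1 (cond b0 26045 26048) (cond b0 16776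 16728))))))) (cond b6 (cond b5 (cond b4 (cond b3 (cond b2 (cond b1 (cond b0 33960 33912) (cond b0 34637 33915)) (cond b1 (cond b0 33962 32424) (cond b0 33965 32136))) (cond b2 (cond b1 (cond b0 5840 13228) (cond b0 33966 33916)) (cond b1 (cond b0 24659 32425) (cond b0 33968 24648)))) (cond b3 (cond b2 (cond b1 (cond b0 33963 34589) (cond b0 30509 30461)) (cond b1 (cond b0 32429 33101) (cond b0 32141 32138))) (cond b2 (cond b1 (cond b0 5839 24850) (cond b0 26770 21107)) (cond b1 (cond b0 28930 17747) (cond b0 15587 24650))))) (cond b4 (cond b3 (cond b2 (cond b1 (cond b0 32520 32522) (cond b0 33197 32525)) (cond b1 (cond b0 31032 30984) (cond b0 31035 30696))) (cond b2 (cond b1 (cond b0 4400 23219) (cond b0 32526 32528)) (cond b1 (cond b0 8908 30985) (cond b0 31036 23208)))) (cond b3 (cond b2 (cond b1 (cond b0 32280 33917) (cond b0 32282 32285)) (cond b1 (cond b0 30792 30795) (cond b0 30504 30456))) (cond b2 (cond b1 (cond b0 4160 32286) (cond b0 22979 32288)) (cond b1 (cond b0 8668 30796) (cond b0 30505 22968))))))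 (cond b5 (cond b4 (cond b3 (cond b2 (cond b1 (cond b0 13324 5792) (cond b0 24658 5791)) (cond b1 (cond b0 23363 4304) (cond b0 32142 4016))) (cond b2 (cond b1 (cond b0 5838 5790) (cond b0 33969 15586)) (cond b1 (cond b0 7042 32435) (cond b0 24654 4013)))) (cond b3 (cond b2 (cond b1 (cond b0 33964 33918) (cond b0 21203 26722)) (cond b1 (cond b0 32432 32430) (cond b0 32144 23075))) (cond b2 (cond b1 (cond b0 15538 24849) (cond b0 15582 15534)) (cond b1 (cond b0 32431 13666) (cond b0 24656 24653))))) (cond b4 (cond b3 (cond b2 (cond b1 (cond b0 32521 24851) (cond b0 17891 28834)) (cond b1 (cond b0 31033 8860) (cond b0 30700 8572))) (cond b2 (cond b1 (cond b0 32531 6994) (cond b0 13714 32527)) (cond b1 (cond b0 15580 15532) (cond b0 23212 23211)))) (cond b3 (cond b2 (cond b1 (cond b0 24840 33920) (cond b0 24842 15539)) (cond b1 (cond b0 23352 30988) (cond b0 23064 23065))) (cond b2 (cond b1 (cond b0 4157 24846) (cond b0 24845 24848)) (cond b1 (cond b0 23355 23356) (cond b0 15576 15528)))))))) (cond b7 (cond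 b6 (cond b5 (cond b4 (cond b3 (cond b2 (cond b1 (cond b0 35161 35113) (cond b0 26771 14140)) (cond b1 (cond b0 21971 33340) (cond b0 24274 12652))) (cond b2 (cond b1 (cond b0 35171 17740) (cond b0 5074 17452)) (cond b1 (cond b0 8674 25852) (cond b0 35167 25851)))) (cond b3 (cond b2 (cond b1 (cond b0 14284 26723) (cond b0 6512 6464)) (cond b1 (cond b0 25618 33102) (cond b0 6511 4976))) (cond b2 (cond b1 (cond b0 6798 5362) (cond b0 6510 34595)) (cond b1 (cond b0 34929 25614) (cond b0 17746 4973))))) (cond b4 (cond b3 (cond b2 (cond b1 (cond b0 33484 21923) (cond b0 33198 25762)) (cond b1 (cond b0 31712 31664) (cond b0 31710 23795))) (cond b2 (cond b1 (cond b0 16018 16302) (cond b0 25329 16014)) (cond b1 (cond b0 31711 24176) (cond b0 14146 24173)))) (cond b3 (cond b2 (cond b1 (cond b0 12844 24178) (cond b0 5072 5071)) (cond b1 (cond b0 23843 31662) (cond b0 3584 3536))) (cond b2 (cond b1 (cond b0 5358 33489) (cond b0 5070 16306)) (cond b1 (cond b0 6802 24174) (cond b0 31715 3533)))))) (cond b5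 (cond b4 (cond b3 (cond b2 (cond b1 (cond b0 17884 35123) (cond b0 5218 6702)) (cond b1 (cond b0 16398 16162) (cond b0 14529 5214))) (cond b2 (cond b1 (cond b0 8912 8864) (cond b0 8911 8576)) (cond b1 (cond b0 8910 6995) (cond b0 33346 8573)))) (cond b3 (cond b2 (cond b1 (cond b0 17644 4978) (cond b0 34643 6462)) (cond b1 (cond b0 16158 14289) (cond b0 16402 4974))) (cond b2 (cond b1 (cond b0 8672 8671) (cond b0 8384 8336)) (cond b1 (cond b0 8670 33106) (cond b0 6515 8333))))) (cond b4 (cond b3 (cond b2 (cond b1 (cond b0 26044 8578) (cond b0 25758 17889)) (cond b1 (cond b0 24272 24271) (cond b0 24270 6706))) (cond b2 (cond b1 (cond b0 7043 8862) (cond b0 33202 8574)) (cond b1 (cond b0 16784 16736) (cond b0 8915 16733)))) (cond b3 (cond b2 (cond b1 (cond b0 26043 35119) (cond b0 5069 17890)) (cond b1 (cond b0 24269 14290) (cond b0 3581 31667))) (cond b2 (cond b1 (cond b0 8669 33490) (cond b0 8381 6467)) (cond b1 (cond b0 16781 8867) (cond b0 16778 16730))))))) (cond b6 (cond b5 (cond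 b4 (cond b3 (cond b2 (cond b1 (cond b0 26760 26712) (cond b0 34640 34828)) (cond b1 (cond b0 26762 25224) (cond b0 17459 25225))) (cond b2 (cond b1 (cond b0 5837 26715) (cond b0 26766 26716)) (cond b1 (cond b0 26765 17736) (cond b0 26768 17448)))) (cond b3 (cond b2 (cond b1 (cond b0 34924 34592) (cond b0 34638 34590)) (cond b1 (cond b0 16163 33104) (cond b0 28642 25235))) (cond b2 (cond b1 (cond b0 17458 34591) (cond b0 26769 8386)) (cond b1 (cond b0 17742 25616) (cond b0 17454 25613))))) (cond b4 (cond b3 (cond b2 (cond b1 (cond b0 25320 25322) (cond b0 33200 16019)) (cond b1 (cond b0 23832 23784) (cond b0 30508 23785))) (cond b2 (cond b1 (cond b0 4397 25325) (cond b0 25326 25328)) (cond b1 (cond b0 23835 16296) (cond b0 23836 16008)))) (cond b3 (cond b2 (cond b1 (cond b0 25321 17651) (cond b0 25331 28594)) (cond b1 (cond b0 23833 30460) (cond b0 8380 8332))) (cond b2 (cond b1 (cond b0 32291 14434) (cond b0 6514 25327)) (cond b1 (cond b0 16300 22972) (cond b0 16012 16011)))))) (cond b5 (cond b4 (cond b3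 (cond b2 (cond b1 (cond b0 26763 5789) (cond b0 34639 17650)) (cond b1 (cond b0 25229 4301) (cond b0 14530 32147))) (cond b2 (cond b1 (cond b0 8909 8861) (cond b0 33970 6707)) (cond b1 (cond b0 17741 17738) (cond b0 8387 17450)))) (cond b3 (cond b2 (cond b1 (cond b0 26764 26718) (cond b0 8338 17649)) (cond b1 (cond b0 25232 25230) (cond b0 25231 6466))) (cond b2 (cond b1 (cond b0 6803 33922) (cond b0 8382 8334)) (cond b1 (cond b0 17744 8675) (cond b0 17456 17453))))) (cond b4 (cond b3 (cond b2 (cond b1 (cond b0 17880 26717) (cond b0 25760 17886)) (cond b1 (cond b0 16392 16395) (cond b0 23068 16396))) (cond b2 (cond b1 (cond b0 17882 17885) (cond b0 8579 17888)) (cond b1 (cond b0 8904 8856) (cond b0 8905 8568)))) (cond b3 (cond b2 (cond b1 (cond b0 17640 26720) (cond b0 25757 17646)) (cond b1 (cond b0 16152 23788) (cond b0 16155 16156))) (cond b2 (cond b1 (cond b0 17642 8339) (cond b0 17645 17648)) (cond b1 (cond b0 8664 8665) (cond b0 8376 8328))))))))) (cond b8 (cond b7 (cond b6 (cond b5 (cond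 b4 (cond b3 (cond b2 (cond b1 (cond b0 29160 29112) (cond b0 29162 28824)) (cond b1 (cond b0 31040 32428) (cond b0 19859 28825))) (cond b2 (cond b1 (cond b0 7037 29115) (cond b0 29165 21336)) (cond b1 (cond b0 29166 29116) (cond b0 29168 19848)))) (cond b3 (cond b2 (cond b1 (cond b0 28920 28922) (cond b0 28632 28584)) (cond b1 (cond b0 30800 19619) (cond b0 31708 28585))) (cond b2 (cond b1 (cond b0 6797 28925) (cond b0 28635 21096)) (cond b1 (cond b0 28926 28928) (cond b0 28636 19608))))) (cond b4 (cond b3 (cond b2 (cond b1 (cond b0 32524 30992) (cond b0 19763 30704)) (cond b1 (cond b0 31038 30990) (cond b0 23842 28835))) (cond b2 (cond b1 (cond b0 19858 30991) (cond b0 21342 23216)) (cond b1 (cond b0 29169 10786) (cond b0 19854 23213)))) (cond b3 (cond b2 (cond b1 (cond b0 28921 20051) (cond b0 28633 31660)) (cond b1 (cond b0 28931 23794) (cond b0 10780 10732))) (cond b2 (cond b1 (cond b0 33491 13234) (cond b0 21100 24172)) (cond b1 (cond b0 2914 28927) (cond b0 19612 19611)))))) (cond b5 (cond b4 (cond b3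 (cond b2 (cond b1 (cond b0 29163 6989) (cond b0 28829 6701)) (cond b1 (cond b0 31039 20050) (cond b0 13330 33347))) (cond b2 (cond b1 (cond b0 13709 13661) (cond b0 21341 21338)) (cond b1 (cond b0 35170 4307) (cond b0 10787 19850)))) (cond b3 (cond b2 (cond b1 (cond b0 21480 29117) (cond b0 21192 21195)) (cond b1 (cond b0 23360 21486) (cond b0 24268 21196))) (cond b2 (cond b1 (cond b0 21482 21485) (cond b0 13704 13656)) (cond b1 (cond b0 12179 21488) (cond b0 13705 12168))))) (cond b4 (cond b3 (cond b2 (cond b1 (cond b0 29164 29118) (cond b0 28832 28830)) (cond b1 (cond b0 10738 20049) (cond b0 28831 2866))) (cond b2 (cond b1 (cond b0 4403 35122) (cond b0 21344 12275)) (cond b1 (cond b0 10782 10734) (cond b0 19856 19853)))) (cond b3 (cond b2 (cond b1 (cond b0 20040 29120) (cond b0 19752 28588)) (cond b1 (cond b0 23357 20046) (cond b0 19755 19756))) (cond b2 (cond b1 (cond b0 20042 10739) (cond b0 12264 12265)) (cond b1 (cond b0 20045 20048) (cond b0 10776 10728))))))) (cond b6 (cond b5 (cond b4 (cond b3 (cond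 b2 (cond b1 (cond b0 29161 29113) (cond b0 20771 32140)) (cond b1 (cond b0 29171 11740) (cond b0 23074 11452))) (cond b2 (cond b1 (cond b0 33971 21340) (cond b0 12274 24652)) (cond b1 (cond b0 2674 19852) (cond b0 29167 19851)))) (cond b3 (cond b2 (cond b1 (cond b0 32284 20723) (cond b0 30512 30464)) (cond b1 (cond b0 30798 23362) (cond b0 30510 28595))) (cond b2 (cond b1 (cond b0 19618 21102) (cond b0 30511 22976)) (cond b1 (cond b0 28929 19614) (cond b0 11746 22973))))) (cond b4 (cond b3 (cond b2 (cond b1 (cond b0 11884 29123) (cond b0 23218 30702)) (cond b1 (cond b0 2912 2864) (cond b0 2911 2576))) (cond b2 (cond b1 (cond b0 4398 4162) (cond b0 32529 23214)) (cond b1 (cond b0 2910 30995) (cond b0 21346 2573)))) (cond b3 (cond b2 (cond b1 (cond b0 11644 22978) (cond b0 28643 30462)) (cond b1 (cond b0 2672 2671) (cond b0 2384 2336))) (cond b2 (cond b1 (cond b0 4158 32289) (cond b0 4402 22974)) (cond b1 (cond b0 2670 21106) (cond b0 30515 2333)))))) (cond b5 (cond b4 (cond b3 (cond b2 (cond b1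 (cond b0 21484 33923) (cond b0 21198 19762)) (cond b1 (cond b0 4018 4302) (cond b0 13329 4014))) (cond b2 (cond b1 (cond b0 13712 13664) (cond b0 13710 5795)) (cond b1 (cond b0 13711 12176) (cond b0 32146 12173)))) (cond b3 (cond b2 (cond b1 (cond b0 24844 12178) (cond b0 23072 23071)) (cond b1 (cond b0 23358 21489) (cond b0 23070 4306))) (cond b2 (cond b1 (cond b0 5843 13662) (cond b0 15584 15536)) (cond b1 (cond b0 30802 12174) (cond b0 13715 15533))))) (cond b4 (cond b3 (cond b2 (cond b1 (cond b0 20044 2578) (cond b0 19758 11889)) (cond b1 (cond b0 31043 2862) (cond b0 21202 2574))) (cond b2 (cond b1 (cond b0 12272 12271) (cond b0 12270 30706)) (cond b1 (cond b0 10784 10736) (cond b0 2915 10733)))) (cond b3 (cond b2 (cond b1 (cond b0 20043 29119) (cond b0 23069 11890)) (cond b1 (cond b0 2669 21490) (cond b0 2381 30467))) (cond b2 (cond b1 (cond b0 12269 32290) (cond b0 15581 13667)) (cond b1 (cond b0 10781 2867) (cond b0 10778 10730)))))))) (cond b7 (cond b6 (cond b5 (cond b4 (cond b3 (cond b2 (cond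 b1 (cond b0 21960 21912) (cond b0 28637 21915)) (cond b1 (cond b0 23840 25228) (cond b0 21966 21916))) (cond b2 (cond b1 (cond b0 21962 14424) (cond b0 21965 14136)) (cond b1 (cond b0 12659 14425) (cond b0 21968 12648)))) (cond b3 (cond b2 (cond b1 (cond b0 21963 28589) (cond b0 6509 6461)) (cond b1 (cond b0 23839 12850) (cond b0 20770 33107))) (cond b2 (cond b1 (cond b0 14429 21101) (cond b0 14141 14138)) (cond b1 (cond b0 34930 11747) (cond b0 3587 12650))))) (cond b4 (cond b3 (cond b2 (cond b1 (cond b0 25324 23792) (cond b0 12658 23791)) (cond b1 (cond b0 23838 23790) (cond b0 21969 3586))) (cond b2 (cond b1 (cond b0 5363 16304) (cond b0 14142 16016)) (cond b1 (cond b0 31042 14435) (cond b0 12654 16013)))) (cond b3 (cond b2 (cond b1 (cond b0 21964 21918) (cond b0 33203 20722)) (cond b1 (cond b0 3538 12849) (cond b0 3582 3534))) (cond b2 (cond b1 (cond b0 14432 14430) (cond b0 14144 5075)) (cond b1 (cond b0 14431 31666) (cond b0 12656 12653)))))) (cond b5 (cond b4 (cond b3 (cond b2 (cond b1 (cond b0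 14520 14522) (cond b0 21197 14525)) (cond b1 (cond b0 16400 5219) (cond b0 14526 14528))) (cond b2 (cond b1 (cond b0 7032 6984) (cond b0 7035 6696)) (cond b1 (cond b0 2908 6985) (cond b0 7036 5208)))) (cond b3 (cond b2 (cond b1 (cond b0 14280 21917) (cond b0 14282 14285)) (cond b1 (cond b0 16160 14286) (cond b0 4979 14288))) (cond b2 (cond b1 (cond b0 6792 6795) (cond b0 6504 6456)) (cond b1 (cond b0 2668 6796) (cond b0 6505 4968))))) (cond b4 (cond b3 (cond b2 (cond b1 (cond b0 14521 12851) (cond b0 11891 34834)) (cond b1 (cond b0 14531 30994) (cond b0 31714 14527))) (cond b2 (cond b1 (cond b0 7033 2860) (cond b0 6700 2572)) (cond b1 (cond b0 3580 3532) (cond b0 5212 5211)))) (cond b3 (cond b2 (cond b1 (cond b0 12840 21920) (cond b0 12842 3539)) (cond b1 (cond b0 16157 12846) (cond b0 12845 12848))) (cond b2 (cond b1 (cond b0 5352 6988) (cond b0 5064 5065)) (cond b1 (cond b0 5355 5356) (cond b0 3576 3528))))))) (cond b6 (cond b5 (cond b4 (cond b3 (cond b2 (cond b1 (cond b0 20760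 20712) (cond b0 28640 28828)) (cond b1 (cond b0 23837 20715) (cond b0 20766 20716))) (cond b2 (cond b1 (cond b0 20762 13224) (cond b0 11459 13225)) (cond b1 (cond b0 20765 11736) (cond b0 20768 11448)))) (cond b3 (cond b2 (cond b1 (cond b0 28924 28592) (cond b0 28638 28590)) (cond b1 (cond b0 11458 28591) (cond b0 20769 2386))) (cond b2 (cond b1 (cond b0 4163 21104) (cond b0 34642 13235)) (cond b1 (cond b0 11742 19616) (cond b0 11454 19613))))) (cond b4 (cond b3 (cond b2 (cond b1 (cond b0 20763 23789) (cond b0 28639 11650)) (cond b1 (cond b0 2909 2861) (cond b0 21970 30707))) (cond b2 (cond b1 (cond b0 13229 16301) (cond b0 32530 14147)) (cond b1 (cond b0 11741 11738) (cond b0 2387 11450)))) (cond b3 (cond b2 (cond b1 (cond b0 20764 20718) (cond b0 2338 11649)) (cond b1 (cond b0 30803 21922) (cond b0 2382 2334))) (cond b2 (cond b1 (cond b0 13232 13230) (cond b0 13231 30466)) (cond b1 (cond b0 11744 2675) (cond b0 11456 11453)))))) (cond b5 (cond b4 (cond b3 (cond b2 (cond b1 (cond b0 13320 13322) (cond b0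 21200 4019)) (cond b1 (cond b0 16397 13325) (cond b0 13326 13328))) (cond b2 (cond b1 (cond b0 5832 5784) (cond b0 6508 5785)) (cond b1 (cond b0 5835 4296) (cond b0 5836 4008)))) (cond b3 (cond b2 (cond b1 (cond b0 13321 11651) (cond b0 13331 34594)) (cond b1 (cond b0 14291 32434) (cond b0 30514 13327))) (cond b2 (cond b1 (cond b0 5833 6460) (cond b0 2380 2332)) (cond b1 (cond b0 4300 4972) (cond b0 4012 4011))))) (cond b4 (cond b3 (cond b2 (cond b1 (cond b0 11880 20717) (cond b0 19760 11886)) (cond b1 (cond b0 11882 11885) (cond b0 2579 11888))) (cond b2 (cond b1 (cond b0 4392 4395) (cond b0 5068 4396)) (cond b1 (cond b0 2904 2856) (cond b0 2905 2568)))) (cond b3 (cond b2 (cond b1 (cond b0 11640 20720) (cond b0 19757 11646)) (cond b1 (cond b0 11642 2339) (cond b0 11645 11648))) (cond b2 (cond b1 (cond b0 4152 5788) (cond b0 4155 4156)) (cond b1 (cond b0 2664 2665) (cond b0 2376 2328))))))))))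

set_option maxRecDepth 100000 in
set_option maxHeartbeats 4000000 in
lemma key : ∀ b0 b1 b2 b3 b4 b5 b6 b7 b8 b9 : Bool,
    verify (upperOf b0 b1 b2 b3 b4 b5 b6 b7 b8 b9)
      (wit b0 b1 b2 b3 b4 b5 b6 b7 b8 b9) = true := by decide

open Classical in
lemma exists_iso (T : Tournament (Fin 5)) : ∃ i : Fin 12, T.Iso (stdT i) := by
  have hiso : T.Iso (fromUpper (upperOf
      (decide (T.arc 0 1)) (decide (T.arc 0 2)) (decide (T.arc 0 3)) (decide (T.arc 0 4))
      (decide (T.arc 1 2)) (decide (T.arc 1 3)) (decide (T.arc 1 4))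
      (decide (T.arc 2 3)) (decide (T.arc 2 4)) (decide (T.arc 3 4)))) := by
    refine ⟨Equiv.refl _, ?_⟩
    intro i j
    show T.arc i j ↔ arcB _ i j = true
    fin_cases i <;> fin_cases j <;>
      simp only [arcB, upperOf, Equiv.refl_apply] <;> simp <;>
      first
        | exact T.irrefl _
        | exact T.total _ _ (by decide)
        | exact Iff.rfl
  exact ⟨_, iso_trans hiso (verify_sound _ _ (key _ _ _ _ _ _ _ _ _ _))⟩

def outdegS (i : Fin 12) (v : Fin 5) : ℕ :=
  (Finset.univ.filter fun w => stdArc i v w = true).card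

def cycS (i : Fin 12) (v : Fin 5) : ℕ :=
  (Finset.univ.filter fun p : Fin 5 × Fin 5 =>
    stdArc i v p.1 = true ∧ stdArc i p.1 p.2 = true ∧ stdArc i p.2 v = true).card

def invS (i : Fin 12) : Multiset (ℕ × ℕ) :=
  Finset.univ.val.map fun v => (outdegS i v, cycS i v)

lemma invS_eq_of_iso {i j : Fin 12} (h : (stdT i).Iso (stdT j)) : invS i = invS j := by
  obtain ⟨e, he⟩ := h
  have he' : ∀ x y, stdArc i x y = true ↔ stdArc j (e x) (e y) = true := he
  have hdeg : ∀ v, outdegS i v = outdegS j (e v) := by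
    intro v
    apply Finset.card_bij' (fun w _ => e w) (fun w _ => e.symm w) <;>
      intro a ha <;>
      simp only [Finset.mem_filter, Finset.mem_univ, true_and] at * <;>
      [skip; skip; simp; simp]
    · exact (he' v a).mp ha
    · have := (he' v (e.symm a)).mpr
      simp only [Equiv.apply_symm_apply] at this
      exact this ha
  have hcyc : ∀ v, cycS i v = cycS j (e v) := by
    intro v
    apply Finset.card_bij' (fun p _ => (e p.1, e p.2)) (fun p _ => (e.symm p.1, e.symm p.2)) <;>
      intro a ha <;>
      simp only [Finset.mem_filter, Finset.mem_univ, true_and] at * <;>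
      [skip; skip; simp; simp]
    · exact ⟨(he' v a.1).mp ha.1, (he' a.1 a.2).mp ha.2.1, (he' a.2 v).mp ha.2.2⟩
    · obtain ⟨h1, h2, h3⟩ := ha
      refine ⟨?_, ?_, ?_⟩
      · have := (he' v (e.symm a.1)).mpr
        simp only [Equiv.apply_symm_apply] at this
        exact this h1
      · have := (he' (e.symm a.1) (e.symm a.2)).mpr
        simp only [Equiv.apply_symm_apply] at this
        exact this h2
      · have := (he' (e.symm a.2) v).mpr
        simp only [Equiv.apply_symm_apply] at this
        exact this h3
  calc invS i = Finset.univ.val.map fun v => (outdegS j (e v), cycS j (e v)) := by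
        unfold invS
        apply Multiset.map_congr rfl
        intro v _
        rw [hdeg v, hcyc v]
    _ = (Finset.univ.val.map e).map fun v => (outdegS j v, cycS j v) := by
        rw [Multiset.map_map]
        rfl
    _ = invS j := by
        have : Finset.univ.val.map e = Finset.univ.val := by
          have h1 : Finset.univ.map e.toEmbedding = Finset.univ := Finset.map_univ_equiv e
          have h2 := congrArg Finset.val h1
          rwa [Finset.map_val] at h2
        rw [this]
        rfl

lemma invS_inj : ∀ i j : Fin 12, invS i = invS j → i = j := by decide

lemma stdT_iso_inj {i j : Fin 12} (h : (stdT i).Iso (stdT j)) : i = j :=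
  invS_inj i j (invS_eq_of_iso h)


lemma indec_iff_finset (T : Tournament (Fin 5)) :
    T.Indecomposable ↔ ∀ F : Finset (Fin 5),
      (∀ x ∈ F, ∀ y ∈ F, ∀ v, v ∉ F → (T.arc v x ↔ T.arc v y)) →
      F.card ≤ 1 ∨ F = Finset.univ := by
  constructor
  · intro hInd F hF
    have hmod : T.IsModule ↑F := by
      intro x hx y hy v hv
      exact hF x (Finset.mem_coe.mp hx) y (Finset.mem_coe.mp hy) v
        (fun hc => hv (Finset.mem_coe.mpr hc))
    rcases hInd _ hmod with h0 | ⟨x, hx⟩ | hu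
    · left
      rw [Finset.coe_eq_empty.mp h0]
      simp
    · left
      rw [Finset.coe_eq_singleton.mp hx]
      simp
    · right; exact Finset.coe_eq_univ.mp hu
  · intro hfin M hM
    have hMf : M.Finite := Set.toFinite M
    have hcoe : ↑hMf.toFinset = M := hMf.coe_toFinset
    have hmem : ∀ x, x ∈ hMf.toFinset ↔ x ∈ M := fun x => hMf.mem_toFinset
    have hmain := hfin hMf.toFinset ?_
    · rcases hmain with hc | hu
      · rcases Finset.card_le_one_iff_subset_singleton.mp hc with ⟨x, hsub⟩
        rcases Finset.subset_singleton_iff.mp hsub with h0 | h1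
        · left; rw [← hcoe, h0]; simp
        · right; left; exact ⟨x, by rw [← hcoe, h1]; simp⟩
      · right; right; rw [← hcoe, hu]; simp
    · intro x hx y hy v hv
      exact hM x ((hmem x).mp hx) y ((hmem y).mp hy) v (fun hc => hv ((hmem v).mpr hc))

instance (i : Fin 12) (x y : Fin 5) : Decidable ((stdT i).arc x y) :=
  decidable_of_iff (stdArc i x y = true) Iff.rfl

set_option maxHeartbeats 1000000 in
lemma stdIndec : ∀ i : Fin 12,
    ((∀ F : Finset (Fin 5),
      (∀ x ∈ F, ∀ y ∈ F, ∀ v, v ∉ F → ((stdT i).arc v x ↔ (stdT i).arc v y)) →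
      F.card ≤ 1 ∨ F = Finset.univ) ↔ (i = 9 ∨ i = 10 ∨ i = 11)) := by decide

instance {n : ℕ} (i j : Fin n) : Decidable ((transTournament n).arc i j) :=
  decidable_of_iff (i.val < j.val) Iff.rfl

instance (i j : Fin 3) : Decidable (C3.arc i j) :=
  decidable_of_iff (j.val = (i.val + 1) % 3) Iff.rfl

instance (i j : Fin 5) : Decidable (U5.arc i j) :=
  decidable_of_iff ((i, j) ∈
    ([(0,1),(0,2),(1,2),(3,0),(1,3),(2,3),(4,0),(4,1),(2,4),(3,4)] : List (Fin 5 × Fin 5)))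
    Iff.rfl

instance (i j : Fin 5) : Decidable (V5.arc i j) :=
  decidable_of_iff ((i, j) ∈
    ([(0,1),(0,2),(1,2),(3,0),(1,3),(2,3),(4,0),(4,1),(2,4),(4,3)] : List (Fin 5 × Fin 5)))
    Iff.rfl

instance (i j : Fin 5) : Decidable (W5.arc i j) :=
  decidable_of_iff ((i, j) ∈
    ([(0,1),(0,2),(0,3),(1,2),(1,3),(2,3),(4,0),(4,2),(1,4),(3,4)] : List (Fin 5 × Fin 5)))
    Iff.rfl

instance {α β : Type} (A : Tournament α) (B : Tournament β) [∀ a b, Decidable (A.arc a b)]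
    [∀ a b, Decidable (B.arc a b)] : ∀ x y, Decidable ((sum2 A B).arc x y)
  | .inl a, .inl b => decidable_of_iff (A.arc a b) Iff.rfl
  | .inl _, .inr _ => .isTrue True.intro
  | .inr _, .inl _ => .isFalse fun h => h
  | .inr a, .inr b => decidable_of_iff (B.arc a b) Iff.rfl

instance {α β γ : Type} (A : Tournament α) (B : Tournament β) (C : Tournament γ)
    [∀ a b, Decidable (A.arc a b)] [∀ a b, Decidable (B.arc a b)]
    [∀ a b, Decidable (C.arc a b)] : ∀ x y, Decidable ((sumC3 A B C).arc x y)
  | .inl a, .inl b => decidable_of_iff (A.arc a b) Iff.rfl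
  | .inl _, .inr (.inl _) => .isTrue True.intro
  | .inl _, .inr (.inr _) => .isFalse fun h => h
  | .inr (.inl _), .inl _ => .isFalse fun h => h
  | .inr (.inl a), .inr (.inl b) => decidable_of_iff (B.arc a b) Iff.rfl
  | .inr (.inl _), .inr (.inr _) => .isTrue True.intro
  | .inr (.inr _), .inl _ => .isTrue True.intro
  | .inr (.inr _), .inr (.inl _) => .isFalse fun h => h
  | .inr (.inr a), .inr (.inr b) => decidable_of_iff (C.arc a b) Iff.rfl

instance (x y : Fin 1 ⊕ Fin 1 ⊕ Fin 2) : Decidable (C4.arc x y) :=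
  decidable_of_iff ((sumC3 oneT oneT twoT).arc x y) Iff.rfl

lemma iso0 : (transTournament 5).Iso (stdT 0) := ⟨Equiv.refl _, by decide⟩
lemma iso1 : (sum2 oneT (sum2 oneT C3)).Iso (stdT 1) :=
  ⟨(Equiv.sumCongr (Equiv.refl (Fin 1)) finSumFinEquiv).trans finSumFinEquiv, by decide⟩
lemma iso2 : (sum2 C3 (sum2 oneT oneT)).Iso (stdT 2) :=
  ⟨(Equiv.sumCongr (Equiv.refl (Fin 3)) finSumFinEquiv).trans finSumFinEquiv, by decide⟩
lemma iso3 : (sum2 oneT (sum2 C3 oneT)).Iso (stdT 3) :=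
  ⟨(Equiv.sumCongr (Equiv.refl (Fin 1)) finSumFinEquiv).trans finSumFinEquiv, by decide⟩
lemma iso4 : (sum2 oneT C4).Iso (stdT 4) :=
  ⟨(Equiv.sumCongr (Equiv.refl (Fin 1))
      ((Equiv.sumCongr (Equiv.refl (Fin 1)) finSumFinEquiv).trans finSumFinEquiv)).trans
    finSumFinEquiv, by decide⟩
lemma iso5 : (sum2 C4 oneT).Iso (stdT 5) :=
  ⟨(Equiv.sumCongr
      ((Equiv.sumCongr (Equiv.refl (Fin 1)) finSumFinEquiv).trans finSumFinEquiv)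
      (Equiv.refl (Fin 1))).trans finSumFinEquiv, by decide⟩
lemma iso6 : (sumC3 oneT twoT twoT).Iso (stdT 6) :=
  ⟨(Equiv.sumCongr (Equiv.refl (Fin 1)) finSumFinEquiv).trans finSumFinEquiv, by decide⟩
lemma iso7 : (sumC3 oneT oneT C3).Iso (stdT 7) :=
  ⟨(Equiv.sumCongr (Equiv.refl (Fin 1)) finSumFinEquiv).trans finSumFinEquiv, by decide⟩
lemma iso8 : (sumC3 oneT oneT (transTournament 3)).Iso (stdT 8) :=
  ⟨(Equiv.sumCongr (Equiv.refl (Fin 1)) finSumFinEquiv).trans finSumFinEquiv, by decide⟩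
lemma iso9 : U5.Iso (stdT 9) := ⟨Equiv.refl _, by decide⟩
lemma iso10 : V5.Iso (stdT 10) := ⟨Equiv.refl _, by decide⟩
lemma iso11 : W5.Iso (stdT 11) := ⟨Equiv.refl _, by decide⟩

lemma fiveList_iso : ∀ i : Fin 12, ((fiveList i).2).Iso (stdT i) := by
  intro i
  fin_cases i
  · exact iso0
  · exact iso1
  · exact iso2
  · exact iso3
  · exact iso4
  · exact iso5
  · exact iso6
  · exact iso7
  · exact iso8
  · exact iso9
  · exact iso10
  · exact iso11

def mapT {V : Type} (T : Tournament V) (e : V ≃ Fin 5) : Tournament (Fin 5) where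
  arc i j := T.arc (e.symm i) (e.symm j)
  irrefl i := T.irrefl _
  total i j h := T.total _ _ fun hh => h (by simpa using congrArg e hh)

lemma iso_mapT {V : Type} (T : Tournament V) (e : V ≃ Fin 5) : T.Iso (mapT T e) :=
  ⟨e, fun x y => by
    show T.arc x y ↔ T.arc (e.symm (e x)) (e.symm (e y))
    rw [e.symm_apply_apply, e.symm_apply_apply]⟩


end Stmt19

/-- Every 5-vertex tournament is isomorphic to exactly one of the twelve
tournaments of `fiveList`; in particular the indecomposable 5-vertex tournaments are, up to
isomorphism, exactly `U5`, `V5` and `W5`. -/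
theorem stmt_19 {V : Type} [Fintype V] (T : Tournament V) (h : Fintype.card V = 5) :
    (∃! i : Fin 12, T.Iso (fiveList i).2) ∧
      (T.Indecomposable ↔ (T.Iso U5 ∨ T.Iso V5 ∨ T.Iso W5)) := by
  have e : V ≃ Fin 5 := Fintype.equivFinOfCardEq h
  obtain ⟨i0, hi0⟩ := Stmt19.exists_iso (Stmt19.mapT T e)
  have hT : T.Iso (Stmt19.stdT i0) := Stmt19.iso_trans (Stmt19.iso_mapT T e) hi0
  have hfl : ∀ j : Fin 12, T.Iso (fiveList j).2 ↔ j = i0 := by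
    intro j
    constructor
    · intro hj
      exact Stmt19.stdT_iso_inj (Stmt19.iso_trans (Stmt19.iso_symm (Stmt19.fiveList_iso j))
        (Stmt19.iso_trans (Stmt19.iso_symm hj) hT))
    · rintro rfl
      exact Stmt19.iso_trans hT (Stmt19.iso_symm (Stmt19.fiveList_iso j))
  refine ⟨⟨i0, (hfl i0).mpr rfl, fun j hj => (hfl j).mp hj⟩, ?_⟩
  have hind : T.Indecomposable ↔ (Stmt19.stdT i0).Indecomposable := Stmt19.indec_iff_of_iso hT
  have hstd : (Stmt19.stdT i0).Indecomposable ↔ (i0 = 9 ∨ i0 = 10 ∨ i0 = 11) := by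
    rw [Stmt19.indec_iff_finset]
    exact Stmt19.stdIndec i0
  constructor
  · intro hi
    rcases hstd.mp (hind.mp hi) with h9 | h10 | h11
    · exact Or.inl (by subst h9; exact Stmt19.iso_trans hT (Stmt19.iso_symm Stmt19.iso9))
    · exact Or.inr (Or.inl (by subst h10; exact Stmt19.iso_trans hT (Stmt19.iso_symm Stmt19.iso10)))
    · exact Or.inr (Or.inr (by subst h11; exact Stmt19.iso_trans hT (Stmt19.iso_symm Stmt19.iso11)))
  · intro hi
    apply hind.mpr
    apply hstd.mpr
    rcases hi with hu | hv | hw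
    · exact Or.inl (Stmt19.stdT_iso_inj (Stmt19.iso_trans (Stmt19.iso_symm hT)
        (Stmt19.iso_trans hu Stmt19.iso9)))
    · exact Or.inr (Or.inl (Stmt19.stdT_iso_inj (Stmt19.iso_trans (Stmt19.iso_symm hT)
        (Stmt19.iso_trans hv Stmt19.iso10))))
    · exact Or.inr (Or.inr (Stmt19.stdT_iso_inj (Stmt19.iso_trans (Stmt19.iso_symm hT)
        (Stmt19.iso_trans hw Stmt19.iso11))))
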